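/- arXiv:0805.3479 — 4 statements merged into one kernel-verified Lean document; each statement's English description precedes it below -/
import Mathlib

section
/- Let r_0, ..., r_{m-1} generate the group A_m ≅ S_{m+1} acting on Z^m via r_i(b_j) = b_j + m_{ij} b_i where m_{ii} = -2, m_{ij} = 1 if |i-j| = 1, and m_{ij} = 0 otherwise. Then for every integer s ≥ 2 and m ≥ 2, the reduction modulo s of this representation is faithful; that is, the image group in GL_m(Z/sZ) is isomorphic to S_{m+1}. -/
/-- The standard root representation of the Coxeter group `A_m ≅ S_{m+1}` over `ℤ`:
`r_i(b_l) = b_l + m_{il} b_i` with `m_{ii} = -2`, `m_{il} = 1` if `|i - l| = 1`, and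
`m_{il} = 0` otherwise.  `AmGen m i` is the matrix of `r_i` (columns are the images
of the basis vectors). -/
def AmGen (m : ℕ) (i : Fin m) : Matrix (Fin m) (Fin m) ℤ :=
  Matrix.of fun k l =>
    (if k = l then 1 else 0) +
      (if k = i then
        (if l = i then -2 else if (l : ℕ) + 1 = (i : ℕ) ∨ (i : ℕ) + 1 = (l : ℕ) then 1 else 0)
      else 0)

/-!
`Equiv.Perm (Fin (m + 1))` permutes the coordinates of `R^{m+1}` and preserves the sum-zero
hyperplane, which has the simple roots `α_j = e_j - e_{j+1}` as a basis; the coordinates of a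
sum-zero vector in this basis are its pairings with the fundamental weights
`ω_k = e_0 + ⋯ + e_k`. This gives a representation of `S_{m+1}` over every commutative ring in
which the transposition `(i, i+1)` acts by `r_i`, and which commutes with reduction of scalars.
It is faithful over every nontrivial ring once `m + 1 ≥ 3`: if `σ a ≠ a`, choose `b ∉ {a, σ a}`;
then `σ` moves the sum-zero vector `e_{σ a} - e_b`.
-/

open Matrix Equiv Finset

theorem Equiv.Perm.eq_one_of_comp_eq_of_sum_eq_zero {α R : Type*} [Fintype α] [DecidableEq α]
    [Ring R] [Nontrivial R] (hα : 3 ≤ Fintype.card α) {σ : Perm α}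
    (h : ∀ x : α → R, ∑ i, x i = 0 → x ∘ σ = x) : σ = 1 := by
  by_contra hσ
  obtain ⟨a, ha⟩ : ∃ a, σ a ≠ a := by simpa [Equiv.ext_iff] using hσ
  obtain ⟨b, -, hb⟩ : ∃ b ∈ univ, b ∉ ({a, σ a} : Finset α) :=
    exists_mem_notMem_of_card_lt_card (card_le_two.trans_lt (by rw [card_univ]; exact hα))
  rw [mem_insert, mem_singleton, not_or] at hb
  have hx := congrFun (h (Pi.single (σ a) 1 - Pi.single b 1) (by simp [sum_sub_distrib])) a
  simp [ha.symm, hb.1, Ne.symm hb.2] at hx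

namespace TypeA

variable (R : Type*) [CommRing R] (m : ℕ)

def simpleRoots : Matrix (Fin (m + 1)) (Fin m) R :=
  of fun i j => (if i = j.castSucc then 1 else 0) - (if i = j.succ then 1 else 0)

def fundamentalWeights : Matrix (Fin m) (Fin (m + 1)) R :=
  of fun k i => if i ≤ k.castSucc then 1 else 0

theorem fundamentalWeights_mul_simpleRoots : fundamentalWeights R m * simpleRoots R m = 1 := by
  ext k j
  simp only [fundamentalWeights, simpleRoots, mul_apply, of_apply, mul_sub, mul_ite, mul_one,
    mul_zero, sum_sub_distrib, sum_ite_eq', mem_univ, if_true, one_apply]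
  simp only [Fin.le_def, Fin.ext_iff, Fin.val_castSucc, Fin.val_succ]
  split_ifs <;> first | omega | simp

theorem fundamentalWeights_mulVec_single_last :
    fundamentalWeights R m *ᵥ Pi.single (Fin.last m) 1 = 0 := by
  ext k
  simp [fundamentalWeights, mulVec, dotProduct, Fin.le_def, Pi.single_apply]

theorem one_vecMul_simpleRoots : 1 ᵥ* simpleRoots R m = 0 := by
  ext j
  simp [simpleRoots, vecMul, dotProduct, sum_sub_distrib]

/-- The square matrices `[simpleRoots | e_m]` and `[fundamentalWeights; 1ᵀ]` are inverse to each
other: one order of the product is computed entrywise, and a one-sided inverse is two-sided. -/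
theorem simpleRoots_mul_fundamentalWeights_add :
    simpleRoots R m * fundamentalWeights R m + vecMulVec (Pi.single (Fin.last m) 1) 1 = 1 := by
  rw [vecMulVec_eq (Fin 1), ← fromCols_mul_fromRows]
  refine (fromCols_mul_fromRows_eq_one_comm finSumFinEquiv.symm _ _ _ _).mpr ?_
  rw [fromRows_mul_fromCols, fundamentalWeights_mul_simpleRoots, ← replicateCol_mulVec,
    fundamentalWeights_mulVec_single_last, ← replicateRow_vecMul, one_vecMul_simpleRoots,
    replicateRow_mul_replicateCol, ← fromBlocks_one]
  congr
  ext i j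
  obtain rfl := Subsingleton.elim i j
  simp

theorem simpleRoots_mul_fundamentalWeights_mul {n : Type*} (M : Matrix (Fin (m + 1)) n R)
    (hM : 1 ᵥ* M = 0) : simpleRoots R m * (fundamentalWeights R m * M) = M := by
  rw [← Matrix.mul_assoc, ← add_sub_cancel_right (simpleRoots R m * fundamentalWeights R m)
    (vecMulVec (Pi.single (Fin.last m) 1) 1), simpleRoots_mul_fundamentalWeights_add,
    Matrix.sub_mul, vecMulVec_mul, hM, Matrix.one_mul, sub_eq_self]
  ext
  simp [vecMulVec_apply]

theorem simpleRoots_mulVec_fundamentalWeights_mulVec (x : Fin (m + 1) → R) (hx : ∑ i, x i = 0) :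
    simpleRoots R m *ᵥ (fundamentalWeights R m *ᵥ x) = x := by
  rw [mulVec_mulVec, ← add_sub_cancel_right (simpleRoots R m * fundamentalWeights R m)
    (vecMulVec (Pi.single (Fin.last m) 1) 1), simpleRoots_mul_fundamentalWeights_add,
    sub_mulVec, vecMulVec_mulVec, one_dotProduct, hx]
  simp

theorem permMatrix_mul_simpleRoots (σ : Perm (Fin (m + 1))) :
    σ.permMatrix R * simpleRoots R m =
      simpleRoots R m * (fundamentalWeights R m * σ.permMatrix R * simpleRoots R m) := by
  rw [Matrix.mul_assoc, simpleRoots_mul_fundamentalWeights_mul]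
  rw [← vecMul_vecMul, vecMul_permMatrix]
  simpa using one_vecMul_simpleRoots R m

def rootRep : Perm (Fin (m + 1)) →* (Matrix (Fin m) (Fin m) R)ˣ :=
  MonoidHom.toHomUnits
    { toFun := fun σ => fundamentalWeights R m * σ⁻¹.permMatrix R * simpleRoots R m
      map_one' := by simp [fundamentalWeights_mul_simpleRoots]
      map_mul' := fun σ τ => by
        conv_lhs => rw [_root_.mul_inv_rev, permMatrix_mul, Matrix.mul_assoc, Matrix.mul_assoc,
          permMatrix_mul_simpleRoots]
        simp only [Matrix.mul_assoc] }

theorem coe_rootRep (σ : Perm (Fin (m + 1))) :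
    (rootRep R m σ : Matrix (Fin m) (Fin m) R) =
      fundamentalWeights R m * σ⁻¹.permMatrix R * simpleRoots R m :=
  rfl

theorem rootRep_apply (σ : Perm (Fin (m + 1))) (k j : Fin m) :
    (rootRep R m σ : Matrix (Fin m) (Fin m) R) k j =
      (if σ j.castSucc ≤ k.castSucc then 1 else 0) - (if σ j.succ ≤ k.castSucc then 1 else 0) := by
  rw [coe_rootRep, PEquiv.mul_toMatrix_toPEquiv]
  simp [fundamentalWeights, simpleRoots, mul_apply, mul_sub, sum_sub_distrib, Perm.inv_def]

theorem rootRep_swap (i : Fin m) :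
    (rootRep ℤ m (swap i.castSucc i.succ) : Matrix (Fin m) (Fin m) ℤ) = AmGen m i := by
  ext k j
  rw [rootRep_apply]
  simp only [AmGen, of_apply, swap_apply_def]
  split_ifs <;> simp only [Fin.ext_iff, Fin.le_def, Fin.val_castSucc, Fin.val_succ] at * <;> omega

theorem units_map_comp_rootRep {S : Type*} [CommRing S] (f : R →+* S) :
    (Units.map f.mapMatrix.toMonoidHom).comp (rootRep R m) = rootRep S m := by
  ext σ k j
  simp [rootRep_apply]

theorem rootRep_injective [Nontrivial R] (hm : 2 ≤ m) : Function.Injective (rootRep R m) := by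
  rw [injective_iff_map_eq_one]
  intro σ hσ
  have hfix : σ⁻¹.permMatrix R * simpleRoots R m = simpleRoots R m := by
    rw [permMatrix_mul_simpleRoots, ← coe_rootRep, hσ, Units.val_one, Matrix.mul_one]
  refine inv_eq_one.mp (Perm.eq_one_of_comp_eq_of_sum_eq_zero (R := R)
    (by rw [Fintype.card_fin]; omega) fun x hx => ?_)
  calc x ∘ ⇑σ⁻¹ = σ⁻¹.permMatrix R *ᵥ x := (permMatrix_mulVec _).symm
    _ = σ⁻¹.permMatrix R *ᵥ (simpleRoots R m *ᵥ (fundamentalWeights R m *ᵥ x)) := by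
      rw [simpleRoots_mulVec_fundamentalWeights_mulVec R m x hx]
    _ = x := by rw [mulVec_mulVec, hfix, simpleRoots_mulVec_fundamentalWeights_mulVec R m x hx]

end TypeA

open TypeA in
/-- For all `m ≥ 2` and `s ≥ 2`, the reduction modulo `s` of the standard
root representation of `A_m ≅ S_{m+1}` is faithful: the reduction map is injective on the
subgroup of `GL_m(ℤ)` generated by the reflections `r_0, …, r_{m-1}`, and its image in
`GL_m(ℤ/s)` is isomorphic to the symmetric group `S_{m+1}`. -/
theorem stmt_3 (m s : ℕ) (hm : 2 ≤ m) (hs : 2 ≤ s)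
    (u : Fin m → (Matrix (Fin m) (Fin m) ℤ)ˣ)
    (hu : ∀ i, (u i : Matrix (Fin m) (Fin m) ℤ) = AmGen m i) :
    Set.InjOn (Units.map ((Int.castRingHom (ZMod s)).mapMatrix.toMonoidHom))
        (↑(Subgroup.closure (Set.range u)) : Set (Matrix (Fin m) (Fin m) ℤ)ˣ) ∧
      Nonempty
        (((Subgroup.closure (Set.range u)).map
            (Units.map ((Int.castRingHom (ZMod s)).mapMatrix.toMonoidHom))) ≃*
          Equiv.Perm (Fin (m + 1))) := by
  have hu' : u = rootRep ℤ m ∘ fun i => swap i.castSucc i.succ :=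
    funext fun i => Units.ext ((hu i).trans (rootRep_swap m i).symm)
  have hclosure : Subgroup.closure (Set.range u) = (rootRep ℤ m).range := by
    rw [hu', Set.range_comp, ← MonoidHom.map_closure, Subgroup.closure_eq_top_of_mclosure_eq_top
      (Perm.mclosure_swap_castSucc_succ m), ← MonoidHom.range_eq_map]
  have : Fact (1 < s) := ⟨hs⟩
  have hinj : Function.Injective
      ((Units.map (Int.castRingHom (ZMod s)).mapMatrix.toMonoidHom).comp (rootRep ℤ m)) := by
    rw [units_map_comp_rootRep]
    exact rootRep_injective _ m hm
  rw [hclosure, MonoidHom.map_range, MonoidHom.coe_range]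
  exact ⟨Function.Injective.injOn_range (f := rootRep ℤ m) hinj,
    ⟨(MonoidHom.ofInjective hinj).symm⟩⟩
end

section
/- Let E = T ⋊ H be a semidirect product where T consists of translations t satisfying t(b_i) = b_i + z_i c with z_i ∈ Z and c = ∑_k x_k b_k an integral vector with x_j = 1 (coefficient of b_j equal to 1), and H is a group of lattice automorphisms satisfying h(b_i) ∈ b_i + span_Z{b_{j+1},...,b_{j+m}} for all h ∈ H. Suppose reduction modulo s is injective on H. Then the kernel of the reduction-mod-s map φ : E → E^s is contained in T. -/
/-!
Write the translation as `t = 1 + c zᵀ`, so that `g = t h = h + c wᵀ` with `w = hᵀ z`.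
Since the `b₀`-row of `h` is `e₀ᵀ` and `c₀ = 1`, the `b₀`-row of `g` is `e₀ᵀ + wᵀ`; as
`g ≡ 1 (mod s)`, this forces `w ≡ 0`, hence `h ≡ g ≡ 1 (mod s)`. Injectivity of reduction on
`H` gives `h = 1`, so `g = t ∈ T`.
-/

namespace Matrix

variable {n R S : Type*} [CommRing R] [CommRing S]

theorem eq_one_add_vecMulVec_of_apply_eq [DecidableEq n] {t : Matrix n n R} {c z : n → R}
    (ht : ∀ k i, t k i = (if k = i then 1 else 0) + z i * c k) :
    t = 1 + vecMulVec c z := by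
  ext k i
  rw [ht, add_apply, one_apply, vecMulVec_apply, mul_comm]

theorem one_add_vecMulVec_mul [Fintype n] [DecidableEq n] (c z : n → R) (h : Matrix n n R) :
    (1 + vecMulVec c z) * h = h + vecMulVec c (z ᵥ* h) := by
  rw [add_mul, one_mul, vecMulVec_mul]

variable (f : R →+* S)

theorem map_add_vecMulVec (h : Matrix n n R) (c w : n → R) :
    (h + vecMulVec c w).map f = h.map f + vecMulVec (f ∘ c) (f ∘ w) := by
  ext k i
  simp only [map_apply, add_apply, vecMulVec_apply, Function.comp_apply, map_add, map_mul]

variable {h : Matrix n n R} {c w : n → R} {i₀ : n}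

theorem comp_eq_zero_of_map_add_vecMulVec_eq_one [DecidableEq n] (hc : c i₀ = 1)
    (hrow : ∀ i, h i₀ i = if i = i₀ then 1 else 0) (hone : (h + vecMulVec c w).map f = 1) :
    f ∘ w = 0 := by
  funext i
  have hentry := congrFun (congrFun hone i₀) i
  simp only [map_apply, add_apply, vecMulVec_apply, hrow, hc, one_mul, map_add, one_apply,
    eq_comm (a := i₀)] at hentry
  split_ifs at hentry <;> simpa using hentry

theorem map_eq_one_of_map_add_vecMulVec_eq_one [DecidableEq n] (hc : c i₀ = 1)
    (hrow : ∀ i, h i₀ i = if i = i₀ then 1 else 0) (hone : (h + vecMulVec c w).map f = 1) :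
    h.map f = 1 := by
  rw [← hone, map_add_vecMulVec, comp_eq_zero_of_map_add_vecMulVec_eq_one f hc hrow hone,
    vecMulVec_zero, add_zero]

end Matrix

open Matrix in
theorem stmt_9_general (m s : ℕ)
    (T H : Subgroup (Matrix (Fin (m + 1)) (Fin (m + 1)) ℤ)ˣ)
    (c : Fin (m + 1) → ℤ) (hc0 : c 0 = 1)
    (hT : ∀ t ∈ T, ∃ z : Fin (m + 1) → ℤ, ∀ k i,
      ((t : Matrix (Fin (m + 1)) (Fin (m + 1)) ℤ)) k i =
        (if k = i then 1 else 0) + z i * c k)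
    (hH : ∀ h ∈ H, ∀ i,
      ((h : Matrix (Fin (m + 1)) (Fin (m + 1)) ℤ)) 0 i = if i = 0 then 1 else 0)
    (hHinj : Set.InjOn
      (fun A : (Matrix (Fin (m + 1)) (Fin (m + 1)) ℤ)ˣ =>
        (A : Matrix (Fin (m + 1)) (Fin (m + 1)) ℤ).map (Int.cast : ℤ → ZMod s))
      (↑H : Set (Matrix (Fin (m + 1)) (Fin (m + 1)) ℤ)ˣ))
    (g t h : (Matrix (Fin (m + 1)) (Fin (m + 1)) ℤ)ˣ)
    (ht : t ∈ T) (hh : h ∈ H) (hg : g = t * h)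
    (hker : (g : Matrix (Fin (m + 1)) (Fin (m + 1)) ℤ).map (Int.cast : ℤ → ZMod s) = 1) :
    g ∈ T := by
  obtain ⟨z, hz⟩ := hT t ht
  have hgh : (g : Matrix (Fin (m + 1)) (Fin (m + 1)) ℤ) =
      h + vecMulVec c (z ᵥ* (h : Matrix (Fin (m + 1)) (Fin (m + 1)) ℤ)) := by
    rw [hg, Units.val_mul, eq_one_add_vecMulVec_of_apply_eq hz, one_add_vecMulVec_mul]
  have hred : (h : Matrix (Fin (m + 1)) (Fin (m + 1)) ℤ).map (Int.castRingHom (ZMod s)) = 1 :=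
    map_eq_one_of_map_add_vecMulVec_eq_one _ hc0 (hH h hh) (hgh ▸ hker)
  have h1 : h = 1 := hHinj hh H.one_mem (by simpa using hred)
  rw [hg, h1, mul_one]
  exact ht

/-- Lemma `toroidreduce`(a).  Let `E = T ⋊ H ⊆ GL_{m+1}(ℤ)` where every
`t ∈ T` is a translation, `t(b_i) = b_i + z_i c`, for an integral vector `c` whose
coefficient at `b_0` equals `1`, and every `h ∈ H` satisfies
`h(b_i) ∈ b_i + span_ℤ{b_1, …, b_m}` (so the `b_0`-coordinate of `h(b_i)` is `δ_{0i}`).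
If reduction modulo `s` is injective on `H`, then the kernel of the reduction map
`φ : E → E^s` is contained in `T`: any `g = t h` (`t ∈ T`, `h ∈ H`) reducing to the
identity mod `s` lies in `T`. -/
theorem stmt_9 (m s : ℕ) (hs : 2 ≤ s)
    (T H : Subgroup (Matrix (Fin (m + 1)) (Fin (m + 1)) ℤ)ˣ)
    (c : Fin (m + 1) → ℤ) (hc0 : c 0 = 1)
    (hT : ∀ t ∈ T, ∃ z : Fin (m + 1) → ℤ, ∀ k i,
      ((t : Matrix (Fin (m + 1)) (Fin (m + 1)) ℤ)) k i =
        (if k = i then 1 else 0) + z i * c k)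
    (hH : ∀ h ∈ H, ∀ i,
      ((h : Matrix (Fin (m + 1)) (Fin (m + 1)) ℤ)) 0 i = if i = 0 then 1 else 0)
    (hHinj : Set.InjOn
      (fun A : (Matrix (Fin (m + 1)) (Fin (m + 1)) ℤ)ˣ =>
        (A : Matrix (Fin (m + 1)) (Fin (m + 1)) ℤ).map (Int.cast : ℤ → ZMod s))
      (↑H : Set (Matrix (Fin (m + 1)) (Fin (m + 1)) ℤ)ˣ))
    (g t h : (Matrix (Fin (m + 1)) (Fin (m + 1)) ℤ)ˣ)
    (ht : t ∈ T) (hh : h ∈ H) (hg : g = t * h)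
    (hker : (g : Matrix (Fin (m + 1)) (Fin (m + 1)) ℤ).map (Int.cast : ℤ → ZMod s) = 1) :
    g ∈ T :=
  stmt_9_general m s T H c hc0 hT hH hHinj g t h ht hh hg hker
end

section
/- Let G = ⟨r_0, ..., r_{n-1}⟩ be a crystallographic string Coxeter group, let s ≥ 2 divide d, and suppose G^s (the reduction of G mod s) is a string C-group. Suppose the facet subgroup G_{n-1} = ⟨r_0,...,r_{n-2}⟩ is finite (spherical) and the reduction map G_{n-1} → G_{n-1}^s is an isomorphism. Then G^d is a string C-group, i.e., the images q_0,...,q_{n-1} of the generators mod d are involutions satisfying the intersection condition ⟨q_i : i ∈ I⟩ ∩ ⟨q_i : i ∈ J⟩ = ⟨q_i : i ∈ I ∩ J⟩ for all I, J ⊆ {0,...,n-1}. -/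
/-!
Write `q_i` for the generators of `G^d` and `π : G^d → G^s` for reduction. Given
`g ∈ ⟨q_i : i ∈ I⟩ ∩ ⟨q_i : i ∈ J⟩`, the intersection property of `G^s` supplies
`h ∈ ⟨q_i : i ∈ I ∩ J⟩` with `π g = π h`, so it suffices to treat `g` in the kernel of `π`.
Split `I` into its final run `{j | [j, n] ⊆ I}` and the rest `I₁`; because some index outside
`I` lies between them, the two parts commute, so `g = a b` with `a ∈ ⟨q_i : i ∈ I₁⟩` and `b` in
the subgroup of the final run. Then `π a` lies in two standard subgroups of `G^s` with disjoint
index sets, hence is trivial, and since `n ∉ I₁` and `π` is injective on the facet subgroup,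
`a = 1`. Thus `g` lies in the subgroup generated by the final runs of both `I` and `J`; these are
nested, so the smaller one is contained in `I ∩ J`.
-/

/-- A family `ρ : Fin n → Γ` of elements of a group makes `Γ` a *string C-group family*
if the `ρ i` are involutions, non-adjacent generators commute (so that the underlying
diagram is a string), and the intersection condition on standard subgroups holds. -/
def IsStringCGroup {Γ : Type*} [Group Γ] {n : ℕ} (ρ : Fin n → Γ) : Prop :=
  (∀ i, orderOf (ρ i) = 2) ∧
  (∀ i j : Fin n, (i : ℕ) + 2 ≤ (j : ℕ) → (ρ i * ρ j) ^ 2 = 1) ∧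
  (∀ I J : Set (Fin n),
    Subgroup.closure (ρ '' I) ⊓ Subgroup.closure (ρ '' J) = Subgroup.closure (ρ '' (I ∩ J)))

/-- Reduction modulo `d` of integral invertible matrices, `GL_n(ℤ) → GL_n(ℤ/d)`. -/
def modRed (n d : ℕ) :
    (Matrix (Fin n) (Fin n) ℤ)ˣ →* (Matrix (Fin n) (Fin n) (ZMod d))ˣ :=
  Units.map ((Int.castRingHom (ZMod d)).mapMatrix.toMonoidHom)

def finalRun {α : Type*} [Preorder α] (I : Set α) : Set α := {j | Set.Ici j ⊆ I}

section finalRun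

variable {α : Type*}

lemma finalRun_subset [Preorder α] (I : Set α) : finalRun I ⊆ I :=
  fun _ hj => hj Set.self_mem_Ici

lemma isUpperSet_finalRun [Preorder α] (I : Set α) : IsUpperSet (finalRun I) :=
  fun _ _ hjk hj => (Set.Ici_subset_Ici.mpr hjk).trans hj

lemma top_mem_finalRun [PartialOrder α] [OrderTop α] {I : Set α} (hI : ⊤ ∈ I) :
    ⊤ ∈ finalRun I := fun _ hk => top_le_iff.mp hk ▸ hI

lemma exists_notMem_between_of_notMem_finalRun [LinearOrder α] {I : Set α} {j k : α}
    (hj : j ∈ I) (hj' : j ∉ finalRun I) (hk : k ∈ finalRun I) :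
    ∃ l ∉ I, j < l ∧ l < k := by
  obtain ⟨l, hjl, hl⟩ := Set.not_subset.mp hj'
  refine ⟨l, hl, lt_of_le_of_ne hjl (by rintro rfl; exact hl hj), ?_⟩
  exact lt_of_not_ge fun hkl => hl (hk hkl)

end finalRun

section Group

variable {G : Type*} [Group G]

lemma commute_of_sq_eq_one {a b : G} (ha : a ^ 2 = 1) (hb : b ^ 2 = 1) (hab : (a * b) ^ 2 = 1) :
    Commute a b := by
  rw [sq, mul_eq_one_iff_eq_inv] at ha hb hab
  rw [Commute, SemiconjBy, hab, mul_inv_rev, ← ha, ← hb]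

lemma Subgroup.exists_mul_eq_of_mem_closure_union {S T : Set G}
    (h : ∀ a ∈ S, ∀ b ∈ T, Commute a b) {g : G} (hg : g ∈ Subgroup.closure (S ∪ T)) :
    ∃ a ∈ Subgroup.closure S, ∃ b ∈ Subgroup.closure T, a * b = g := by
  have hle : Subgroup.closure S ≤ Subgroup.normalizer (Subgroup.closure T : Set G) := by
    refine le_trans ?_ (Subgroup.centralizer_le_normalizer _)
    rw [Subgroup.centralizer_closure, Subgroup.closure_le]
    exact fun a ha b hb => (h a ha b hb).symm.eq
  rw [Subgroup.closure_union, ← SetLike.mem_coe,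
    Subgroup.coe_mul_of_left_le_normalizer_right _ _ hle] at hg
  exact hg

end Group

lemma image_subset_range_castSucc {α : Type*} {n : ℕ} (q : Fin (n + 1) → α)
    {K : Set (Fin (n + 1))} (hK : Fin.last n ∉ K) :
    q '' K ⊆ Set.range fun i : Fin n => q i.castSucc := by
  rintro _ ⟨j, hj, rfl⟩
  exact ⟨j.castPred (ne_of_mem_of_not_mem hj hK), congrArg q (Fin.castSucc_castPred _ _)⟩

section Reduction

open Subgroup

variable {Γ Λ : Type*} [Group Γ] [Group Λ] {n : ℕ} {q : Fin (n + 1) → Γ}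

lemma map_closure_image (π : Γ →* Λ) (K : Set (Fin (n + 1))) :
    (closure (q '' K)).map π = closure ((fun i => π (q i)) '' K) := by
  rw [MonoidHom.map_closure, Set.image_image]

variable (π : Γ →* Λ)

lemma mem_closure_finalRun_of_map_eq_one
    (hcomm : ∀ i j : Fin (n + 1), (i : ℕ) + 2 ≤ (j : ℕ) → Commute (q i) (q j))
    (hint : ∀ I J : Set (Fin (n + 1)), closure ((fun i => π (q i)) '' I) ⊓
      closure ((fun i => π (q i)) '' J) = closure ((fun i => π (q i)) '' (I ∩ J)))
    (hinj : Set.InjOn π (closure (Set.range fun i : Fin n => q i.castSucc)))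
    {I : Set (Fin (n + 1))} {g : Γ} (hg : g ∈ closure (q '' I)) (hπg : π g = 1) :
    g ∈ closure (q '' finalRun I) := by
  set I₁ := I \ finalRun I
  have hlast : Fin.last n ∉ I₁ := fun h => h.2 (top_mem_finalRun (α := Fin (n + 1)) h.1)
  have hsplit : q '' I = q '' I₁ ∪ q '' finalRun I := by
    rw [← Set.image_union, Set.sdiff_union_of_subset (finalRun_subset I)]
  have hcomm' : ∀ a ∈ q '' I₁, ∀ b ∈ q '' finalRun I, Commute a b := by
    rintro _ ⟨j, hj, rfl⟩ _ ⟨k, hk, rfl⟩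
    obtain ⟨l, -, hjl, hlk⟩ := exists_notMem_between_of_notMem_finalRun hj.1 hj.2 hk
    exact hcomm j k (by rw [Fin.lt_def] at hjl hlk; omega)
  rw [hsplit] at hg
  obtain ⟨a, ha, b, hb, rfl⟩ := exists_mul_eq_of_mem_closure_union hcomm' hg
  have hπa : π a ∈ closure ((fun i => π (q i)) '' (I₁ ∩ finalRun I)) := by
    rw [← hint, ← map_closure_image, ← map_closure_image]
    have hπab : π a = (π b)⁻¹ := eq_inv_of_mul_eq_one_left (by rwa [← map_mul])
    exact mem_inf.mpr ⟨mem_map_of_mem π ha, hπab ▸ inv_mem (mem_map_of_mem π hb)⟩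
  rw [Set.sdiff_inter_self, Set.image_empty, Subgroup.closure_empty, mem_bot] at hπa
  have ha1 : a = 1 :=
    hinj (closure_mono (image_subset_range_castSucc q hlast) ha) (one_mem _) (by rw [hπa, map_one])
  rwa [ha1, one_mul]

lemma closure_image_inf_eq_of_injOn
    (hcomm : ∀ i j : Fin (n + 1), (i : ℕ) + 2 ≤ (j : ℕ) → Commute (q i) (q j))
    (hint : ∀ I J : Set (Fin (n + 1)), closure ((fun i => π (q i)) '' I) ⊓
      closure ((fun i => π (q i)) '' J) = closure ((fun i => π (q i)) '' (I ∩ J)))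
    (hinj : Set.InjOn π (closure (Set.range fun i : Fin n => q i.castSucc)))
    (I J : Set (Fin (n + 1))) :
    closure (q '' I) ⊓ closure (q '' J) = closure (q '' (I ∩ J)) := by
  refine le_antisymm ?_ (le_inf (closure_mono (Set.image_mono Set.inter_subset_left))
    (closure_mono (Set.image_mono Set.inter_subset_right)))
  rintro g ⟨hgI, hgJ⟩
  obtain ⟨h, hh, hπh⟩ : π g ∈ (closure (q '' (I ∩ J))).map π := by
    rw [map_closure_image, ← hint, ← map_closure_image, ← map_closure_image]
    exact ⟨mem_map_of_mem π hgI, mem_map_of_mem π hgJ⟩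
  have hhI := closure_mono (Set.image_mono Set.inter_subset_left) hh
  have hhJ := closure_mono (Set.image_mono Set.inter_subset_right) hh
  have hπ : π (g * h⁻¹) = 1 := by rw [map_mul, map_inv, hπh, mul_inv_cancel]
  have hI := mem_closure_finalRun_of_map_eq_one π hcomm hint hinj (mul_mem hgI (inv_mem hhI)) hπ
  have hJ := mem_closure_finalRun_of_map_eq_one π hcomm hint hinj (mul_mem hgJ (inv_mem hhJ)) hπ
  have hIJ : g * h⁻¹ ∈ closure (q '' (I ∩ J)) := by
    rcases (isUpperSet_finalRun I).total (isUpperSet_finalRun J) with hsub | hsub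
    · exact closure_mono (Set.image_mono (Set.subset_inter (finalRun_subset I)
        (hsub.trans (finalRun_subset J)))) hI
    · exact closure_mono (Set.image_mono (Set.subset_inter (hsub.trans (finalRun_subset I))
        (finalRun_subset J))) hJ
  simpa using mul_mem hIJ hh

end Reduction

theorem IsStringCGroup.of_injOn_facet {Γ Λ : Type*} [Group Γ] [Group Λ] {n : ℕ}
    {q : Fin (n + 1) → Γ} (π : Γ →* Λ) (hq : ∀ i, q i ^ 2 = 1)
    (hrel : ∀ i j : Fin (n + 1), (i : ℕ) + 2 ≤ (j : ℕ) → (q i * q j) ^ 2 = 1)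
    (hC : IsStringCGroup fun i => π (q i))
    (hinj : Set.InjOn π (Subgroup.closure (Set.range fun i : Fin n => q i.castSucc))) :
    IsStringCGroup q :=
  ⟨fun i => orderOf_eq_prime (hq i) fun h => by simpa [h] using hC.1 i, hrel,
    closure_image_inf_eq_of_injOn π
      (fun i j hij => commute_of_sq_eq_one (hq i) (hq j) (hrel i j hij)) hC.2.2 hinj⟩

lemma units_map_castHom_comp_modRed {s d : ℕ} (hsd : s ∣ d) (n : ℕ) :
    (Units.map (ZMod.castHom hsd (ZMod s)).mapMatrix.toMonoidHom).comp (modRed n d) =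
      modRed n s := by
  ext x i j
  simp [modRed]

theorem stmt_10_general (n : ℕ) (r : Fin (n + 1) → (Matrix (Fin (n + 1)) (Fin (n + 1)) ℤ)ˣ)
    (hinv : ∀ i, orderOf (r i) = 2)
    (hcomm : ∀ i j : Fin (n + 1), (i : ℕ) + 2 ≤ (j : ℕ) → (r i * r j) ^ 2 = 1)
    (s d : ℕ) (hsd : s ∣ d)
    (hCs : IsStringCGroup fun i => modRed (n + 1) s (r i))
    (hfaithful : Set.InjOn (modRed (n + 1) s)
      (↑(Subgroup.closure (Set.range fun i : Fin n => r i.castSucc)) :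
        Set (Matrix (Fin (n + 1)) (Fin (n + 1)) ℤ)ˣ)) :
    IsStringCGroup fun i => modRed (n + 1) d (r i) := by
  obtain ⟨π, hπ⟩ : ∃ π : _ →* _, π.comp (modRed (n + 1) d) = modRed (n + 1) s :=
    ⟨_, units_map_castHom_comp_modRed hsd (n + 1)⟩
  refine IsStringCGroup.of_injOn_facet π (fun i => ?_) (fun i j hij => ?_) ?_ ?_
  · rw [← map_pow, ← hinv i, pow_orderOf_eq_one, map_one]
  · rw [← map_mul, ← map_pow, hcomm i j hij, map_one]
  · simpa only [← MonoidHom.comp_apply, hπ] using hCs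
  · rw [← hπ, MonoidHom.coe_comp] at hfaithful
    simpa [Set.range_comp', ← MonoidHom.map_closure] using hfaithful.image_of_comp

/-- Theorem `interquotA`(a), spherical case.  Let
`G = ⟨r_0, …, r_{n-1}⟩ ⊆ GL_n(ℤ)` be a crystallographic string Coxeter group (the `r_i`
are involutions satisfying the string commutation relations), let `2 ≤ s ∣ d`, and
suppose the reduction `G^s` is a string C-group.  If the facet subgroup
`G_{n-1} = ⟨r_0, …, r_{n-2}⟩` is finite (spherical) and reduction mod `s` is injective
on it (`G_{n-1} ≅ G_{n-1}^s`), then `G^d` is a string C-group. -/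
theorem stmt_10 (n : ℕ) (r : Fin (n + 1) → (Matrix (Fin (n + 1)) (Fin (n + 1)) ℤ)ˣ)
    (hinv : ∀ i, orderOf (r i) = 2)
    (hcomm : ∀ i j : Fin (n + 1), (i : ℕ) + 2 ≤ (j : ℕ) → (r i * r j) ^ 2 = 1)
    (s d : ℕ) (hs : 2 ≤ s) (hd : 2 ≤ d) (hsd : s ∣ d)
    (hCs : IsStringCGroup fun i => modRed (n + 1) s (r i))
    (hfin : Finite (Subgroup.closure (Set.range fun i : Fin n => r i.castSucc)))
    (hfaithful : Set.InjOn (modRed (n + 1) s)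
      (↑(Subgroup.closure (Set.range fun i : Fin n => r i.castSucc)) :
        Set (Matrix (Fin (n + 1)) (Fin (n + 1)) ℤ)ˣ)) :
    IsStringCGroup fun i => modRed (n + 1) d (r i) :=
  stmt_10_general n r hinv hcomm s d hsd hCs hfaithful
end

section
/- Let G = ⟨r_0, r_1, r_2, r_3, r_4, r_5⟩ be a Coxeter group isomorphic to [3,4,3,3,3]. Define s_0 = r_1, s_1 = r_0, s_2 = r_2 r_1 r_2, s_3 = r_3, s_4 = r_4, s_5 = r_5. Then H = ⟨s_0, ..., s_5⟩ is a subgroup of G, the elements s_i are involutions, and they satisfy the Coxeter relations of type [3,3,4,3,3]: (s_0 s_1)^3 = (s_1 s_2)^3 = (s_2 s_3)^4 = (s_3 s_4)^3 = (s_4 s_5)^3 = 1 and (s_i s_j)^2 = 1 for |i - j| ≥ 2. -/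
/-! Apart from `s_2 = r_2 r_1 r_2`, which is a reflection, the `s_i` are simple reflections.
Each relation involving `s_2` is a conjugate of a relation of `[3,4,3,3,3]`:
`s_1 s_2 = r_2 (r_0 r_1) r_2` and `s_2 s_3 = (r_2 r_3) (r_1 r_2) (r_2 r_3)⁻¹`, while
`(s_0 s_2)^2 = (r_1 r_2)^4`; `s_2` commutes with `s_4, s_5` because `r_1, r_2` do. -/

/-- The Coxeter matrix of the string Coxeter group `[3,4,3,3,3]`. -/
def M34333 : CoxeterMatrix (Fin 6) where
  M := !![1, 3, 2, 2, 2, 2;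
          3, 1, 4, 2, 2, 2;
          2, 4, 1, 3, 2, 2;
          2, 2, 3, 1, 3, 2;
          2, 2, 2, 3, 1, 3;
          2, 2, 2, 2, 3, 1]
  off_diagonal i i' h := by
    fin_cases i <;> fin_cases i' <;> simp_all

section Involution

variable {G : Type*} [Group G] {a b : G}

theorem mul_pow_two_eq_one_iff_commute (ha : a * a = 1) (hb : b * b = 1) :
    (a * b) ^ 2 = 1 ↔ Commute a b := by
  rw [pow_two, ← eq_inv_iff_mul_eq_one, mul_inv_rev, inv_eq_of_mul_eq_one_right ha,
    inv_eq_of_mul_eq_one_right hb]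
  rfl

theorem mul_mul_eq_of_mul_pow_three (ha : a * a = 1) (hb : b * b = 1) (h : (a * b) ^ 3 = 1) :
    a * b * a = b * a * b := by
  have h' : a * b * a * (b * a * b) = 1 := by
    simpa only [pow_succ, pow_zero, one_mul, mul_assoc] using h
  simp only [eq_inv_of_mul_eq_one_left h', mul_inv_rev, inv_eq_of_mul_eq_one_right ha,
    inv_eq_of_mul_eq_one_right hb, mul_assoc]

end Involution

namespace CoxeterSystem

variable {B W : Type*} [Group W] {M : CoxeterMatrix B}

theorem IsReflection.orderOf_eq_two {cs : CoxeterSystem M W} {t : W} (ht : cs.IsReflection t) :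
    orderOf t = 2 :=
  orderOf_eq_prime ht.pow_two fun h => by simpa [h] using ht.odd_length

variable (cs : CoxeterSystem M W) {i j k : B}

local prefix:100 "s" => cs.simple

theorem isReflection_simple_conj (i j : B) : cs.IsReflection (s j * s i * s j) := by
  simpa using (cs.isReflection_simple i).conj (s j)

theorem commute_simple (h : M i j = 2) : Commute (s i) (s j) :=
  (mul_pow_two_eq_one_iff_commute (cs.simple_mul_simple_self i) (cs.simple_mul_simple_self j)).1
    (h ▸ cs.simple_mul_simple_pow i j)

theorem simple_braid (h : M i j = 3) : s i * s j * s i = s j * s i * s j :=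
  mul_mul_eq_of_mul_pow_three (cs.simple_mul_simple_self i) (cs.simple_mul_simple_self j)
    (h ▸ cs.simple_mul_simple_pow i j)

theorem commute_simple_conj (h : M i j = 4) : Commute (s i) (s j * s i * s j) := by
  refine (mul_pow_two_eq_one_iff_commute (cs.simple_mul_simple_self i)
    (cs.isReflection_simple_conj i j).mul_self).1 ?_
  have hij := cs.simple_mul_simple_pow i j
  rw [h] at hij
  simpa only [pow_succ, pow_zero, one_mul, mul_assoc] using hij

theorem simple_mul_conj_pow (h : M k j = 2) : (s k * (s j * s i * s j)) ^ M k i = 1 := by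
  have key : s k * (s j * s i * s j) = s j * (s k * s i) * (s j)⁻¹ := by
    rw [inv_simple, ← mul_assoc, ← mul_assoc, (cs.commute_simple h).eq]
    simp only [mul_assoc]
  rw [key, conj_pow, simple_mul_simple_pow, mul_one, mul_inv_cancel]

theorem conj_mul_simple_pow (hik : M i k = 2) (hjk : M j k = 3) :
    (s j * s i * s j * s k) ^ M i j = 1 := by
  have key : s j * s i * s j * s k = (s j * s k) * (s i * s j) * (s j * s k)⁻¹ := by
    symm
    calc s j * s k * (s i * s j) * (s j * s k)⁻¹ = s j * (s k * s i) * (s j * s k * s j) := by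
          simp only [mul_inv_rev, inv_simple, mul_assoc]
      _ = s j * (s i * s k) * (s k * s j * s k) := by
          rw [(cs.commute_simple hik).eq, cs.simple_braid hjk]
      _ = s j * s i * s j * s k := by simp only [mul_assoc, simple_mul_simple_cancel_left]
  rw [key, conj_pow, simple_mul_simple_pow, mul_one, mul_inv_cancel]

theorem commute_conj_simple (hik : M i k = 2) (hjk : M j k = 2) :
    Commute (s j * s i * s j) (s k) :=
  ((cs.commute_simple hjk).mul_left (cs.commute_simple hik)).mul_left (cs.commute_simple hjk)

end CoxeterSystem

/-- Let `G = ⟨r_0, …, r_5⟩ ≅ [3,4,3,3,3]` and set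
`s_0 = r_1, s_1 = r_0, s_2 = r_2 r_1 r_2, s_3 = r_3, s_4 = r_4, s_5 = r_5`.
Then the `s_i` are involutions satisfying the Coxeter relations of the string type
`[3,3,4,3,3]`. -/
theorem stmt_14 : ∀ s : Fin 6 → M34333.Group,
    (s 0 = M34333.simple 1 ∧ s 1 = M34333.simple 0 ∧
      s 2 = M34333.simple 2 * M34333.simple 1 * M34333.simple 2 ∧
      s 3 = M34333.simple 3 ∧ s 4 = M34333.simple 4 ∧ s 5 = M34333.simple 5) →
    (∀ i, orderOf (s i) = 2) ∧
      (s 0 * s 1) ^ 3 = 1 ∧ (s 1 * s 2) ^ 3 = 1 ∧ (s 2 * s 3) ^ 4 = 1 ∧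
      (s 3 * s 4) ^ 3 = 1 ∧ (s 4 * s 5) ^ 3 = 1 ∧
      (∀ i j : Fin 6, (i : ℕ) + 2 ≤ (j : ℕ) ∨ (j : ℕ) + 2 ≤ (i : ℕ) →
        (s i * s j) ^ 2 = 1) := by
  rintro s ⟨h0, h1, h2, h3, h4, h5⟩
  set cs := M34333.toCoxeterSystem
  have hs : ∀ i, cs.IsReflection (s i) := by
    intro i
    fin_cases i <;> simp only [Fin.zero_eta, Fin.mk_one, Fin.reduceFinMk, h0, h1, h2, h3, h4, h5]
    all_goals first | exact cs.isReflection_simple _ | exact cs.isReflection_simple_conj 1 2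
  have hcomm : ∀ i j : Fin 6, (i : ℕ) + 2 ≤ j → Commute (s i) (s j) := by
    intro i j hij
    fin_cases i <;> fin_cases j <;> simp at hij <;>
      simp only [Fin.zero_eta, Fin.mk_one, Fin.reduceFinMk, h0, h1, h2, h3, h4, h5]
    all_goals first
      | exact cs.commute_simple rfl
      | exact cs.commute_simple_conj rfl
      | exact cs.commute_conj_simple rfl rfl
  refine ⟨fun i => (hs i).orderOf_eq_two, ?_, ?_, ?_, ?_, ?_, fun i j hij => ?_⟩
  · rw [h0, h1]; exact cs.simple_mul_simple_pow 1 0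
  · rw [h1, h2]; exact cs.simple_mul_conj_pow (i := 1) (j := 2) (k := 0) rfl
  · rw [h2, h3]; exact cs.conj_mul_simple_pow (k := 3) rfl rfl
  · rw [h3, h4]; exact cs.simple_mul_simple_pow 3 4
  · rw [h4, h5]; exact cs.simple_mul_simple_pow 4 5
  · rw [mul_pow_two_eq_one_iff_commute (hs i).mul_self (hs j).mul_self]
    rcases hij with hij | hij
    exacts [hcomm i j hij, (hcomm j i hij).symm]
end
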